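/- Let D be a compact metric space and H a separable real Hilbert space. For any natural number N, the set of H-valued vector measures on D that can be written as a sum of at most N Dirac delta measures (i.e., measures of the form ∑_{j=1}^{N} u_j δ_{x_j} with u_j ∈ H and x_j ∈ D) is closed with respect to the weak-* topology on the dual of C(D, H). -/

import Mathlib

open NormedSpace

/-- The H-valued vector measure `c δ_x`, viewed as an element of the dual of `C(D, H)`:
it acts on `φ` by `⟨c δ_x, φ⟩ = ⟪c, φ(x)⟫_H`. -/
noncomputable def dirac {D H : Type*} [TopologicalSpace D] [CompactSpace D]
    [NormedAddCommGroup H] [InnerProductSpace ℝ H] (c : H) (x : D) :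
    StrongDual ℝ C(D, H) :=
  (innerSL ℝ c).comp (ContinuousMap.evalCLM ℝ x)

open Metric RealInnerProductSpace

set_option linter.unusedSectionVars false

section AuxSection

variable {ι : Type*} {F : Type*} [NormedAddCommGroup F] [NormedSpace ℝ F]

lemma weakDual_sum_apply (s : Finset ι) (w : ι → WeakDual ℝ F) (φ : F) :
    (∑ j ∈ s, w j) φ = ∑ j ∈ s, w j φ := by
  classical
  induction s using Finset.induction_on with
  | empty => rfl
  | insert _ _ h ih => rw [Finset.sum_insert h, Finset.sum_insert h, ← ih]; rfl

variable {D H : Type*} [MetricSpace D] [CompactSpace D]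
  [NormedAddCommGroup H] [InnerProductSpace ℝ H]
lemma kill (u : C(D,H) →L[ℝ] ℝ) (φ : C(D,H)) (K : Set D) (hK : IsClosed K)
    (hsupp : ∀ y, y ∉ K → φ y = 0)
    (hloc : ∀ x ∈ K, ∃ ε > 0, ∀ ψ : C(D,H), (∀ y, ¬ dist y x < ε → ψ y = 0) → u ψ = 0) :
    u φ = 0 := by
  classical
  choose! ε hε hkill using hloc
  have hcov0 : K ⊆ ⋃ x : K, ball (x : D) (ε x / 2) := fun x hx =>
    Set.mem_iUnion.2 ⟨⟨x, hx⟩, mem_ball_self (by linarith [hε x hx])⟩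
  obtain ⟨t, ht⟩ := hK.isCompact.elim_finite_subcover
    (fun x : K => ball (x : D) (ε x / 2)) (fun _ => isOpen_ball) hcov0
  -- bump functions
  set ρ : K → C(D, ℝ) := fun i =>
    ⟨fun y => max 0 (ε i / 2 - dist y i),
      continuous_const.max (continuous_const.sub (continuous_id.dist continuous_const))⟩ with hρ
  have hρ_nonneg : ∀ i y, 0 ≤ ρ i y := fun i y => le_max_left _ _
  set σ : C(D, ℝ) := ∑ i ∈ t, ρ i with hσ
  have hσ_apply : ∀ y, σ y = ∑ i ∈ t, ρ i y := fun y => by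
    rw [hσ]; exact ContinuousMap.sum_apply t _ y
  have hσ_pos : ∀ y ∈ K, 0 < σ y := by
    intro y hy
    obtain ⟨i, hit, hib⟩ := Set.mem_iUnion₂.1 (ht hy)
    rw [hσ_apply]
    refine Finset.sum_pos' (fun j _ => hρ_nonneg j y) ⟨i, hit, ?_⟩
    have : dist y (i : D) < ε i / 2 := mem_ball.1 hib
    simp only [hρ, ContinuousMap.coe_mk]
    exact lt_max_of_lt_right (by linarith)
  -- the pieces
  have hcont : ∀ i : K, Continuous fun y => (ρ i y / σ y) • φ y := by
    intro i
    refine continuous_iff_continuousAt.2 fun y0 => ?_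
    by_cases h0 : σ y0 = 0
    · have hy0 : y0 ∉ K := fun hy => (hσ_pos y0 hy).ne' h0
      have hev : (fun y => (ρ i y / σ y) • φ y) =ᶠ[nhds y0] fun _ => 0 := by
        filter_upwards [hK.isOpen_compl.mem_nhds hy0] with y hy
        rw [hsupp y hy, smul_zero]
      exact ContinuousAt.congr continuousAt_const hev.symm
    · exact (((ρ i).continuous.continuousAt.div σ.continuous.continuousAt h0).smul
        φ.continuous.continuousAt)
  set F : K → C(D, H) := fun i => ⟨fun y => (ρ i y / σ y) • φ y, hcont i⟩ with hF
  have hφ_sum : φ = ∑ i ∈ t, F i := by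
    ext y
    rw [ContinuousMap.sum_apply]
    by_cases hy : y ∈ K
    · have h1 : ∑ i ∈ t, F i y = (∑ i ∈ t, ρ i y / σ y) • φ y := by
        rw [Finset.sum_smul]; exact Finset.sum_congr rfl fun i _ => rfl
      rw [h1, ← Finset.sum_div, ← hσ_apply, div_self (hσ_pos y hy).ne', one_smul]
    · simp only [hF, ContinuousMap.coe_mk, hsupp y hy, smul_zero, Finset.sum_const,
        smul_zero]
  have hkillF : ∀ i ∈ t, u (F i) = 0 := by
    intro i _
    refine hkill i i.2 (F i) fun y hy => ?_
    have hd : ε i ≤ dist y i := not_lt.1 hy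
    have : ρ i y = 0 := by
      simp only [hρ, ContinuousMap.coe_mk]
      exact max_eq_left (by linarith [hε i i.2])
    simp only [hF, ContinuousMap.coe_mk, this, zero_div, zero_smul]
  rw [hφ_sum, map_sum]
  exact Finset.sum_eq_zero hkillF
lemma vanish (u : C(D,H) →L[ℝ] ℝ) (E : Set D) (hEfin : E.Finite)
    (hloc : ∀ x, x ∉ E → ∃ ε > 0, ∀ ψ : C(D,H), (∀ y, ¬ dist y x < ε → ψ y = 0) → u ψ = 0)
    (φ : C(D,H)) (hφ : ∀ y ∈ E, φ y = 0) : u φ = 0 := by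
  classical
  rcases E.eq_empty_or_nonempty with rfl | hne
  · exact kill u φ Set.univ isClosed_univ (fun y hy => absurd (Set.mem_univ y) hy)
      (fun x _ => hloc x (Set.notMem_empty x))
  have hEc : IsClosed E := hEfin.isClosed
  -- main estimate
  have key : ∀ δ : ℝ, 0 < δ → |u φ| ≤ ‖u‖ * δ := by
    intro δ hδ
    -- find r > 0 such that points r-close to E have small φ
    obtain ⟨r, hr, hsmall⟩ : ∃ r > 0, ∀ y : D, infDist y E ≤ r → ‖φ y‖ ≤ δ := by
      set C : Set D := {y | δ ≤ ‖φ y‖} with hC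
      have hCc : IsClosed C := isClosed_le continuous_const (φ.continuous.norm)
      rcases C.eq_empty_or_nonempty with hCe | hCne
      · exact ⟨1, one_pos, fun y _ => by
          by_contra hy
          exact (Set.notMem_empty y) (hCe ▸ (show y ∈ C from le_of_not_ge hy))⟩
      · obtain ⟨y0, hy0C, hmin⟩ := hCc.isCompact.exists_isMinOn hCne
          ((continuous_infDist_pt E).continuousOn)
        have hy0E : y0 ∉ E := fun hy => by
          have hd : δ ≤ ‖φ y0‖ := hy0C
          rw [hφ y0 hy, norm_zero] at hd
          linarith
        have hpos : 0 < infDist y0 E := (hEc.notMem_iff_infDist_pos hne).1 hy0E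
        refine ⟨infDist y0 E / 2, by linarith, fun y hy => ?_⟩
        by_contra hylarge
        have hyC : y ∈ C := le_of_not_ge hylarge
        have := hmin hyC
        simp only [Set.mem_setOf_eq] at this
        linarith [this]
    -- cutoff function
    set χ : C(D, ℝ) := ⟨fun y => max 0 (min 1 (2 * infDist y E / r - 1)),
      continuous_const.max (continuous_const.min
        (((continuous_const.mul (continuous_infDist_pt E)).div_const r).sub continuous_const))⟩
      with hχ
    have hχ01 : ∀ y, 0 ≤ χ y ∧ χ y ≤ 1 := fun y =>
      ⟨le_max_left _ _, max_le (by norm_num) (min_le_left _ _)⟩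
    have hχ1 : ∀ y : D, r < infDist y E → χ y = 1 := by
      intro y hy
      have h2 : (1:ℝ) ≤ 2 * infDist y E / r - 1 := by
        rw [le_sub_iff_add_le, le_div_iff₀ hr]
        linarith
      simp only [hχ, ContinuousMap.coe_mk]
      rw [min_eq_left h2, max_eq_right (by norm_num)]
    have hχ0 : ∀ y : D, infDist y E < r / 2 → χ y = 0 := by
      intro y hy
      have h2 : 2 * infDist y E / r - 1 < 0 := by
        rw [sub_neg, div_lt_iff₀ hr]
        have : 0 ≤ infDist y E := infDist_nonneg
        linarith
      simp only [hχ, ContinuousMap.coe_mk]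
      rw [max_eq_left (le_of_lt (lt_of_le_of_lt (min_le_right _ _) h2))]
    -- u (χ • φ) = 0
    have hkill : u (χ • φ) = 0 := by
      refine kill u (χ • φ) {y | r / 2 ≤ infDist y E}
        (isClosed_le continuous_const (continuous_infDist_pt E)) ?_ ?_
      · intro y hy
        have : infDist y E < r / 2 := lt_of_not_ge hy
        rw [ContinuousMap.smul_apply', hχ0 y this, zero_smul]
      · intro x hx
        refine hloc x fun hxE => ?_
        have : infDist x E = 0 := infDist_zero_of_mem hxE
        rw [Set.mem_setOf_eq, this] at hx
        linarith
    have hdiff : ‖φ - χ • φ‖ ≤ δ := by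
      refine (ContinuousMap.norm_le _ (le_of_lt hδ)).2 fun y => ?_
      have hsub : (φ - χ • φ) y = (1 - χ y) • φ y := by
        simp [ContinuousMap.smul_apply', sub_smul, one_smul]
      rw [hsub, norm_smul]
      rcases le_or_gt (infDist y E) r with hyr | hyr
      · have h1 : ‖(1 : ℝ) - χ y‖ ≤ 1 := by
          rw [Real.norm_eq_abs, abs_le]
          constructor <;> [linarith [(hχ01 y).2]; linarith [(hχ01 y).1]]
        calc ‖(1:ℝ) - χ y‖ * ‖φ y‖ ≤ 1 * ‖φ y‖ :=
              mul_le_mul_of_nonneg_right h1 (norm_nonneg _)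
          _ = ‖φ y‖ := one_mul _
          _ ≤ δ := hsmall y hyr
      · rw [hχ1 y hyr]
        simp [le_of_lt hδ]
    calc |u φ| = |u (φ - χ • φ)| := by rw [map_sub, hkill, sub_zero]
      _ ≤ ‖u‖ * ‖φ - χ • φ‖ := u.le_opNorm _
      _ ≤ ‖u‖ * δ := mul_le_mul_of_nonneg_left hdiff (norm_nonneg u)
  -- conclude
  by_contra hne0
  have ha : 0 < |u φ| := abs_pos.2 hne0
  have hb := key (|u φ| / (2 * (‖u‖ + 1))) (by positivity)
  have hu : 0 ≤ ‖u‖ := norm_nonneg u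
  have h1 : ‖u‖ * (|u φ| / (2 * (‖u‖ + 1))) < |u φ| := by
    rw [div_eq_mul_inv]
    have h2 : ‖u‖ * |u φ| < |u φ| * (2 * (‖u‖ + 1)) := by nlinarith
    calc ‖u‖ * (|u φ| * (2 * (‖u‖ + 1))⁻¹) = ‖u‖ * |u φ| * (2 * (‖u‖ + 1))⁻¹ := by ring
      _ < |u φ| * (2 * (‖u‖ + 1)) * (2 * (‖u‖ + 1))⁻¹ := by
          apply mul_lt_mul_of_pos_right h2; positivity
      _ = |u φ| := by field_simp
  linarith
/-- The essential set of `u`. -/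
def Ess (u : C(D,H) →L[ℝ] ℝ) : Set D :=
  {x | ∀ ε > 0, ∃ φ : C(D,H), (∀ y, ¬ dist y x < ε → φ y = 0) ∧ u φ ≠ 0}

lemma no_big_tuple {N : ℕ} (u : C(D,H) →L[ℝ] ℝ)
    (hprod : ∀ φ : Fin (N+1) → C(D,H),
      (∀ i j, i ≠ j → ∀ y, φ i y = 0 ∨ φ j y = 0) → ∃ j, u (φ j) = 0)
    (f : Fin (N+1) → D) (hinj : Function.Injective f) (hmem : ∀ j, f j ∈ Ess u) : False := by
  classical
  set s : Finset (Fin (N+1) × Fin (N+1)) := Finset.univ.offDiag with hs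
  set ε : ℝ := if h : s.Nonempty then (s.inf' h fun p => dist (f p.1) (f p.2)) / 3 else 1
    with hε
  have hεpos : 0 < ε := by
    rw [hε]
    split_ifs with h
    · refine div_pos ?_ (by norm_num)
      rw [Finset.lt_inf'_iff]
      intro p hp
      have hne : p.1 ≠ p.2 := (Finset.mem_offDiag.1 hp).2.2
      exact dist_pos.2 fun hd => hne (hinj hd)
    · norm_num
  have hεle : ∀ i j, i ≠ j → 3 * ε ≤ dist (f i) (f j) := by
    intro i j hij
    have hmem' : (i, j) ∈ s := Finset.mem_offDiag.2 ⟨Finset.mem_univ _, Finset.mem_univ _, hij⟩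
    have hne : s.Nonempty := ⟨_, hmem'⟩
    rw [hε, dif_pos hne]
    have := Finset.inf'_le (fun p => dist (f p.1) (f p.2)) hmem'
    linarith
  choose φ hφsupp hφne using fun j => hmem j ε hεpos
  have hdisj : ∀ i j, i ≠ j → ∀ y, φ i y = 0 ∨ φ j y = 0 := by
    intro i j hij y
    by_contra hcon
    push_neg at hcon
    have h1 : dist y (f i) < ε := by
      by_contra h; exact hcon.1 (hφsupp i y h)
    have h2 : dist y (f j) < ε := by
      by_contra h; exact hcon.2 (hφsupp j y h)
    have := dist_triangle (f i) y (f j)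
    rw [dist_comm (f i) y] at this
    have h3 := hεle i j hij
    linarith
  obtain ⟨j, hj⟩ := hprod φ hdisj
  exact hφne j hj

lemma backward [Nonempty D] [CompleteSpace H] (N : ℕ) (u : C(D,H) →L[ℝ] ℝ)
    (hprod : ∀ φ : Fin (N+1) → C(D,H),
      (∀ i j, i ≠ j → ∀ y, φ i y = 0 ∨ φ j y = 0) → ∃ j, u (φ j) = 0) :
    ∃ (c : Fin N → H) (x : Fin N → D), ∀ ψ : C(D,H), u ψ = ∑ j, ⟪c j, ψ (x j)⟫ := by
  classical
  set E := Ess u with hE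
  -- every finset inside E has card ≤ N
  have hcard : ∀ t : Finset D, ↑t ⊆ E → t.card ≤ N := by
    intro t ht
    by_contra hbig
    push_neg at hbig
    obtain ⟨t', ht', hcard'⟩ := Finset.exists_subset_card_eq hbig
    have e := t'.equivFin
    rw [hcard'] at e
    refine no_big_tuple u hprod (fun j => (e.symm j : D)) ?_ ?_
    · intro i j hij
      exact e.symm.injective (Subtype.coe_injective hij)
    · intro j
      exact ht (ht' (e.symm j).2)
  have hEfin : E.Finite := by
    by_contra hinf
    have hinf' : E.Infinite := hinf
    obtain ⟨t, htE, htfin, htcard⟩ := hinf'.exists_subset_ncard_eq (N+1)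
    have : htfin.toFinset.card ≤ N := hcard htfin.toFinset (by simpa using htE)
    rw [Set.ncard_eq_toFinset_card t htfin] at htcard
    omega
  have hk : hEfin.toFinset.card ≤ N := hcard hEfin.toFinset (by simp)
  -- enumerate E and pad
  set k := hEfin.toFinset.card with hkdef
  have e := hEfin.toFinset.equivFin
  obtain ⟨d0⟩ := ‹Nonempty D›
  set x : Fin N → D := fun j => if h : (j : ℕ) < k then (e.symm ⟨j, h⟩ : D) else d0 with hx
  have hEx : E ⊆ Set.range x := by
    intro y hy
    obtain ⟨i, hi⟩ : ∃ i, (e.symm i : D) = y := ⟨e ⟨y, hEfin.mem_toFinset.2 hy⟩, by simp⟩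
    refine ⟨⟨i, lt_of_lt_of_le i.2 hk⟩, ?_⟩
    rw [hx]
    simp only [dif_pos (show (i : ℕ) < k from i.2)]
    rw [← hi]
  -- minimal representatives
  set P : Fin N → Prop := fun j => ∀ i, x i = x j → j ≤ i with hP
  set T : Finset (Fin N) := Finset.univ.filter P with hT
  have hTinj : ∀ i ∈ T, ∀ j ∈ T, x i = x j → i = j := by
    intro i hi j hj hij
    have h1 := (Finset.mem_filter.1 hi).2 j hij.symm
    have h2 := (Finset.mem_filter.1 hj).2 i hij
    exact le_antisymm h1 h2
  have hTcov : ∀ i : Fin N, ∃ j ∈ T, x j = x i := by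
    intro i
    set s := Finset.univ.filter (fun i' => x i' = x i) with hs
    have hne : s.Nonempty := ⟨i, Finset.mem_filter.2 ⟨Finset.mem_univ _, rfl⟩⟩
    refine ⟨s.min' hne, Finset.mem_filter.2 ⟨Finset.mem_univ _, ?_⟩,
      (Finset.mem_filter.1 (s.min'_mem hne)).2⟩
    intro i' hi'
    have hxi : x (s.min' hne) = x i := (Finset.mem_filter.1 (s.min'_mem hne)).2
    exact s.min'_le i' (Finset.mem_filter.2 ⟨Finset.mem_univ _, by rw [hi', hxi]⟩)
  -- separation radius
  set r : ℝ := if h : (T.offDiag).Nonempty then T.offDiag.inf' h fun p => dist (x p.1) (x p.2)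
    else 1 with hr
  have hrpos : 0 < r := by
    rw [hr]
    split_ifs with h
    · rw [Finset.lt_inf'_iff]
      intro p hp
      obtain ⟨h1, h2, h3⟩ := Finset.mem_offDiag.1 hp
      exact dist_pos.2 fun hd => h3 (hTinj _ h1 _ h2 hd)
    · norm_num
  have hrle : ∀ i ∈ T, ∀ j ∈ T, i ≠ j → r ≤ dist (x i) (x j) := by
    intro i hi j hj hij
    have hmem : (i, j) ∈ T.offDiag := Finset.mem_offDiag.2 ⟨hi, hj, hij⟩
    rw [hr, dif_pos ⟨_, hmem⟩]
    exact Finset.inf'_le _ hmem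
  -- bump functions
  set θ : Fin N → C(D, ℝ) := fun j =>
    ⟨fun y => max 0 (1 - dist y (x j) / r),
      continuous_const.max (continuous_const.sub
        ((continuous_id.dist continuous_const).div_const r))⟩ with hθ
  have hθself : ∀ j, θ j (x j) = 1 := by
    intro j
    simp [hθ]
  have hθother : ∀ i ∈ T, ∀ j ∈ T, i ≠ j → θ j (x i) = 0 := by
    intro i hi j hj hij
    have hd := hrle i hi j hj hij
    simp only [hθ, ContinuousMap.coe_mk]
    have : dist (x i) (x j) / r ≥ 1 := (one_le_div hrpos).2 hd
    exact max_eq_left (by linarith)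
  have hθ01 : ∀ j y, 0 ≤ θ j y ∧ θ j y ≤ 1 := by
    intro j y
    refine ⟨le_max_left _ _, max_le (by norm_num) ?_⟩
    have h1 : 0 ≤ dist y (x j) / r := div_nonneg dist_nonneg (le_of_lt hrpos)
    linarith
  -- the Riesz functionals
  have hLbound : ∀ (j : Fin N) (v : H), ‖u (θ j • ContinuousMap.const D v)‖ ≤ ‖u‖ * ‖v‖ := by
    intro j v
    calc ‖u (θ j • ContinuousMap.const D v)‖ ≤ ‖u‖ * ‖θ j • ContinuousMap.const D v‖ :=
          u.le_opNorm _
      _ ≤ ‖u‖ * ‖v‖ := by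
          refine mul_le_mul_of_nonneg_left ?_ (norm_nonneg u)
          refine (ContinuousMap.norm_le _ (norm_nonneg v)).2 fun y => ?_
          rw [ContinuousMap.smul_apply', ContinuousMap.const_apply, norm_smul]
          calc ‖θ j y‖ * ‖v‖ ≤ 1 * ‖v‖ := by
                refine mul_le_mul_of_nonneg_right ?_ (norm_nonneg v)
                rw [Real.norm_eq_abs, abs_le]
                exact ⟨by linarith [(hθ01 j y).1], (hθ01 j y).2⟩
            _ = ‖v‖ := one_mul _
  set L : Fin N → H →L[ℝ] ℝ := fun j =>
    LinearMap.mkContinuous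
      { toFun := fun v => u (θ j • ContinuousMap.const D v)
        map_add' := fun v w => by
          have h : θ j • ContinuousMap.const D (v + w)
              = θ j • ContinuousMap.const D v + θ j • ContinuousMap.const D w := by
            ext y
            simp only [ContinuousMap.smul_apply', ContinuousMap.const_apply,
              ContinuousMap.add_apply]
            exact smul_add _ _ _
          show u (θ j • ContinuousMap.const D (v + w)) = _
          rw [h, map_add]
        map_smul' := fun a v => by
          have h : θ j • ContinuousMap.const D (a • v)
              = a • (θ j • ContinuousMap.const D v) := by
            ext y
            simp only [ContinuousMap.smul_apply', ContinuousMap.const_apply]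
            exact smul_comm _ _ _
          show u (θ j • ContinuousMap.const D (a • v)) = _
          rw [h, map_smul, RingHom.id_apply] }
      ‖u‖ (fun v => hLbound _ v) with hL
  set c : Fin N → H := fun j =>
    if j ∈ T then (InnerProductSpace.toDual ℝ H).symm (L j) else 0 with hc
  refine ⟨c, x, fun ψ => ?_⟩
  -- decompose ψ
  set g : Fin N → C(D,H) := fun j => θ j • ContinuousMap.const D (ψ (x j)) with hg
  set ψ' : C(D,H) := ψ - ∑ j ∈ T, g j with hψ'
  have hψ'E : ∀ y ∈ E, ψ' y = 0 := by
    intro y hy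
    obtain ⟨i, hi⟩ := hEx hy
    obtain ⟨j0, hj0T, hj0⟩ := hTcov i
    have hgy : ∀ j ∈ T, g j y = θ j y • ψ (x j) := fun j _ => by
      simp [hg, ContinuousMap.smul_apply']
    have hsum : (∑ j ∈ T, g j) y = ∑ j ∈ T, θ j y • ψ (x j) := by
      rw [ContinuousMap.sum_apply]
      exact Finset.sum_congr rfl hgy
    have hyx : y = x j0 := by rw [← hi, ← hj0]
    have hsum2 : ∑ j ∈ T, θ j (x j0) • ψ (x j) = ψ (x j0) := by
      rw [Finset.sum_eq_single j0 (fun j hj hne => by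
        rw [hθother j0 hj0T j hj (Ne.symm hne), zero_smul])
        (fun h => absurd hj0T h), hθself, one_smul]
    have hstep : ψ' y = ψ y - ∑ j ∈ T, θ j y • ψ (x j) := by
      rw [hψ', ContinuousMap.sub_apply, hsum]
    rw [hstep, hyx, hsum2, sub_self]
  have hloc' : ∀ z, z ∉ E → ∃ ε > 0, ∀ ψ₀ : C(D,H),
      (∀ y, ¬ dist y z < ε → ψ₀ y = 0) → u ψ₀ = 0 := by
    intro z hz
    have hz' : ¬ (∀ ε > 0, ∃ φ : C(D,H), (∀ y, ¬ dist y z < ε → φ y = 0) ∧ u φ ≠ 0) := hz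
    push_neg at hz'
    obtain ⟨ε, hε, hall⟩ := hz'
    exact ⟨ε, hε, fun ψ₀ hψ₀ => hall ψ₀ (fun y hy => hψ₀ y (not_lt.2 hy))⟩
  have hψ'0 : u ψ' = 0 := vanish u E hEfin hloc' ψ' hψ'E
  have huψ : u ψ = ∑ j ∈ T, u (g j) := by
    have : u ψ' = u ψ - ∑ j ∈ T, u (g j) := by
      rw [hψ', map_sub, map_sum]
    rw [this] at hψ'0
    linarith
  rw [huψ]
  have hterm : ∀ j ∈ T, u (g j) = ⟪c j, ψ (x j)⟫ := by
    intro j hj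
    simp only [hc]
    rw [if_pos hj]
    rw [InnerProductSpace.toDual_symm_apply]
    rfl
  rw [Finset.sum_congr rfl hterm]
  exact Finset.sum_subset (Finset.subset_univ T) fun j _ hj => by
    simp only [hc]
    rw [if_neg hj]
    exact inner_zero_left _
end AuxSection

/-- Let `D` be a compact metric space and `H` a separable real Hilbert
space.  For any `N : ℕ`, the set of `H`-valued vector measures on `D` (identified with
elements of the dual of `C(D,H)`) which can be written as a sum of at most `N` Dirac
delta measures `∑_{j=1}^N c_j δ_{x_j}` is closed in the weak-* topology. -/
theorem dirac_sums_weakStar_closed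
    (D H : Type*) [MetricSpace D] [CompactSpace D]
    [NormedAddCommGroup H] [InnerProductSpace ℝ H] [CompleteSpace H]
    [TopologicalSpace.SeparableSpace H] (N : ℕ) :
    IsClosed {u : WeakDual ℝ C(D, H) |
      ∃ (c : Fin N → H) (x : Fin N → D),
        u = ∑ j, StrongDual.toWeakDual (dirac (c j) (x j))} := by
  classical
  rcases isEmpty_or_nonempty D with hD | hD
  · have hCsub : Subsingleton C(D, H) :=
      ⟨fun f g => ContinuousMap.ext fun y => hD.elim y⟩
    have hsub : Subsingleton (WeakDual ℝ C(D, H)) :=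
      ⟨fun a b => DFunLike.ext a b fun φ => by
        rw [Subsingleton.elim φ (0 : C(D,H)), map_zero, map_zero]⟩
    rcases Set.eq_empty_or_nonempty {u : WeakDual ℝ C(D, H) |
      ∃ (c : Fin N → H) (x : Fin N → D),
        u = ∑ j, StrongDual.toWeakDual (dirac (c j) (x j))} with h | h
    · rw [h]; exact isClosed_empty
    · obtain ⟨a, ha⟩ := h
      have : {u : WeakDual ℝ C(D, H) |
          ∃ (c : Fin N → H) (x : Fin N → D),
            u = ∑ j, StrongDual.toWeakDual (dirac (c j) (x j))} = Set.univ :=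
        Set.eq_univ_of_forall fun v => (Subsingleton.elim a v) ▸ ha
      rw [this]; exact isClosed_univ
  · have key : {u : WeakDual ℝ C(D, H) |
        ∃ (c : Fin N → H) (x : Fin N → D),
          u = ∑ j, StrongDual.toWeakDual (dirac (c j) (x j))}
        = ⋂ (φ : Fin (N+1) → C(D,H)),
          {u : WeakDual ℝ C(D,H) |
            (∀ i j, i ≠ j → ∀ y, φ i y = 0 ∨ φ j y = 0) → ∏ j, u (φ j) = 0} := by
      ext u
      simp only [Set.mem_iInter, Set.mem_setOf_eq]
      constructor
      · rintro ⟨c, x, rfl⟩ φ hdisj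
        by_contra hne
        have hall : ∀ j, (∑ k, StrongDual.toWeakDual (dirac (c k) (x k))) (φ j) ≠ 0 :=
          fun j hj => hne (Finset.prod_eq_zero (Finset.mem_univ j) hj)
        have hex : ∀ j : Fin (N+1), ∃ k : Fin N, φ j (x k) ≠ 0 := by
          intro j
          by_contra hno
          push_neg at hno
          apply hall j
          rw [weakDual_sum_apply]
          refine Finset.sum_eq_zero fun k _ => ?_
          have h1 : StrongDual.toWeakDual (dirac (c k) (x k)) (φ j) = ⟪c k, φ j (x k)⟫ := rfl
          rw [h1, hno k, inner_zero_right]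
        choose gk hgk using hex
        obtain ⟨i, j, hij, hgij⟩ := Fintype.exists_ne_map_eq_of_card_lt gk (by simp)
        rcases hdisj i j hij (x (gk i)) with h | h
        · exact hgk i h
        · exact hgk j (by rw [← hgij]; exact h)
      · intro hall
        have hprod : ∀ φ : Fin (N+1) → C(D,H),
            (∀ i j, i ≠ j → ∀ y, φ i y = 0 ∨ φ j y = 0) →
            ∃ j, (u : C(D,H) →L[ℝ] ℝ) (φ j) = 0 := by
          intro φ hdisj
          have h0 := hall φ hdisj
          obtain ⟨j, _, hj⟩ := Finset.prod_eq_zero_iff.1 h0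
          exact ⟨j, hj⟩
        obtain ⟨c, x, hcx⟩ := backward N u hprod
        refine ⟨c, x, DFunLike.ext _ _ fun ψ => ?_⟩
        rw [weakDual_sum_apply]
        exact (hcx ψ).trans (Finset.sum_congr rfl fun j _ => rfl)
    rw [key]
    refine isClosed_iInter fun φ => ?_
    by_cases hf : ∀ i j, i ≠ j → ∀ y, φ i y = 0 ∨ φ j y = 0
    · have heq : {u : WeakDual ℝ C(D,H) |
          (∀ i j, i ≠ j → ∀ y, φ i y = 0 ∨ φ j y = 0) → ∏ j, u (φ j) = 0}
          = (fun u : WeakDual ℝ C(D,H) => ∏ j, u (φ j)) ⁻¹' {0} := by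
        ext u
        simp only [Set.mem_setOf_eq, Set.mem_preimage, Set.mem_singleton_iff]
        exact ⟨fun h => h hf, fun h _ => h⟩
      rw [heq]
      exact IsClosed.preimage
        (continuous_finset_prod _ fun j _ => WeakDual.eval_continuous (φ j))
        isClosed_singleton
    · have heq : {u : WeakDual ℝ C(D,H) |
          (∀ i j, i ≠ j → ∀ y, φ i y = 0 ∨ φ j y = 0) → ∏ j, u (φ j) = 0}
          = Set.univ := by
        ext u; simp only [Set.mem_setOf_eq, Set.mem_univ, iff_true]
        exact fun h => absurd h hf
      rw [heq]; exact isClosed_univ
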